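/- Let f be a pdf supported on [−1/4, 1/4]. For every nonzero integer j, |f̂(j)|² ≤ (‖f∗f‖_∞ / π) · sin(π / ‖f∗f‖_∞). -/

import Mathlib

/-
Put `g = f ∗ f`. Then `ĝ(j) = f̂(j)²`, `g ≥ 0`, `∫ g = 1`, and `g ≤ M := ‖g‖_∞` almost
everywhere, with `M` finite because `f ∈ L²`. After a rotation, `‖ĝ(j)‖ = ∫ h g` for
`h(c) = cos (2π (s - j c))`. Among densities `0 ≤ g ≤ M` of mass one, `∫ h g` is largest for
the bathtub profile `g = M · 1{h > t}`, so for `t = cos (π / M)` we get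
`∫ h g ≤ M ∫ (h - t)⁺ + t`. Since `c ↦ s - j c` preserves Haar measure when `j ≠ 0`, the
integral of `(h - t)⁺` is that of `(cos 2πx - cos (π / M))⁺` over `[-1/2, 1/2]`, namely
`sin (π / M) / π - cos (π / M) / M`.
-/

open MeasureTheory
/-- Convolution of two functions on the circle `𝕋 = ℝ/ℤ` (with its Haar measure). -/
noncomputable def conv (f g : UnitAddCircle → ℝ) (c : UnitAddCircle) : ℝ := ∫ x, f x * g (c - x)

/-- A pdf on the circle: a nonnegative function in `L²` with integral 1. -/
def IsPdf (f : UnitAddCircle → ℝ) : Prop :=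
  (∀ x, 0 ≤ f x) ∧ MeasureTheory.MemLp f 2 volume ∧ (∫ x, f x) = 1

/-- The function `f` on the circle is supported on (the image of) `[-1/4, 1/4]`. -/
def SuppIn (f : UnitAddCircle → ℝ) : Prop :=
  ∀ x : UnitAddCircle, f x ≠ 0 → ∃ r : ℝ, |r| ≤ 1/4 ∧ (r : UnitAddCircle) = x

/-- The essential supremum (`L^∞` norm) of a function on the circle. -/
noncomputable def normInf (h : UnitAddCircle → ℝ) : ℝ := (eLpNorm h ⊤ volume).toReal

/-- The square of the `L²` norm of a function on the circle. -/
noncomputable def norm2sq (h : UnitAddCircle → ℝ) : ℝ := ∫ x, (h x)^2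

/-- The `j`-th Fourier coefficient of a real function on the circle. -/
noncomputable def fc (f : UnitAddCircle → ℝ) (j : ℤ) : ℂ := fourierCoeff (fun x => (f x : ℂ)) j

open Real Set Convolution

instance : IsProbabilityMeasure (volume : Measure UnitAddCircle) := ⟨UnitAddCircle.measure_univ⟩

lemma conv_nonneg {f g : UnitAddCircle → ℝ} (hf : ∀ x, 0 ≤ f x) (hg : ∀ x, 0 ≤ g x)
    (c : UnitAddCircle) : 0 ≤ conv f g c :=
  integral_nonneg fun x => mul_nonneg (hf x) (hg _)

lemma integrable_conv {f g : UnitAddCircle → ℝ} (hf : Integrable f) (hg : Integrable g) :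
    Integrable (conv f g) :=
  hf.integrable_convolution (ContinuousLinearMap.mul ℝ ℝ) hg

lemma integral_conv {f g : UnitAddCircle → ℝ} (hf : Integrable f) (hg : Integrable g) :
    ∫ c, conv f g c = (∫ x, f x) * ∫ x, g x :=
  integral_convolution (ContinuousLinearMap.mul ℝ ℝ) hf hg

lemma abs_conv_self_le {f : UnitAddCircle → ℝ} (hf : MemLp f 2 volume) (c : UnitAddCircle) :
    |conv f f c| ≤ norm2sq f := by
  have hsq : Integrable (fun x => f x ^ 2) := hf.integrable_sq
  have hsq' : Integrable (fun x => f (c - x) ^ 2) := hsq.comp_sub_left c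
  have hmean : Integrable (fun x => (f x ^ 2 + f (c - x) ^ 2) / 2) :=
    (hsq.add hsq').div_const 2
  rw [← Real.norm_eq_abs, conv]
  calc ‖∫ x, f x * f (c - x)‖
      ≤ ∫ x, (f x ^ 2 + f (c - x) ^ 2) / 2 :=
        norm_integral_le_of_norm_le hmean <| .of_forall fun x => by
          rw [Real.norm_eq_abs, abs_le]
          constructor
          · nlinarith [sq_nonneg (f x + f (c - x))]
          · nlinarith [sq_nonneg (f x - f (c - x))]
    _ = norm2sq f := by
        rw [integral_div, integral_add hsq hsq', integral_sub_left_eq_self (fun x => f x ^ 2)]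
        unfold norm2sq
        ring

lemma memLp_top_conv_self {f : UnitAddCircle → ℝ} (hf : MemLp f 2 volume) :
    MemLp (conv f f) ⊤ volume :=
  have hfi := hf.integrable one_le_two
  .of_bound (integrable_conv hfi hfi).aestronglyMeasurable (norm2sq f)
    (.of_forall (abs_conv_self_le hf))

lemma ae_le_normInf {g : UnitAddCircle → ℝ} (hg : MemLp g ⊤ volume) :
    ∀ᵐ c, g c ≤ normInf g := by
  filter_upwards [ae_le_eLpNormEssSup (f := g) (μ := volume)] with c hc
  calc g c ≤ ‖g c‖ := le_abs_self _
    _ = (‖g c‖ₑ).toReal := by simp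
    _ ≤ normInf g := by
        rw [normInf, eLpNorm_exponent_top]
        exact ENNReal.toReal_mono (by simpa [eLpNorm_exponent_top] using hg.eLpNorm_ne_top) hc

lemma haarAddCircle_eq_volume : (AddCircle.haarAddCircle : Measure UnitAddCircle) = volume := by
  simp [AddCircle.volume_eq_smul_haarAddCircle]

lemma fc_eq_integral (f : UnitAddCircle → ℝ) (j : ℤ) :
    fc f j = ∫ c, fourier (-j) c * (f c : ℂ) := by
  simp [fc, fourierCoeff, haarAddCircle_eq_volume]

lemma fourier_apply_add {T : ℝ} (n : ℤ) (x y : AddCircle T) :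
    fourier n (x + y) = fourier n x * fourier n y := by
  simp only [fourier_apply, smul_add, AddCircle.toCircle_add, Circle.coe_mul]

lemma fc_conv {f g : UnitAddCircle → ℝ} (hf : Integrable f) (hg : Integrable g) (j : ℤ) :
    fc (conv f g) j = fc f j * fc g j := by
  set e : UnitAddCircle → ℂ := fun c => fourier (-j) c
  have twist : ∀ {φ : UnitAddCircle → ℝ}, Integrable φ →
      Integrable (fun c => e c * (φ c : ℂ)) :=
    fun hφ => hφ.ofReal.bdd_mul (c := 1) (fourier (-j)).continuous.aestronglyMeasurable
      (.of_forall fun c => by simp [e, fourier_apply, Circle.norm_coe])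
  -- `e` is a character, so twisting both factors by `e` twists their convolution by `e`.
  have hconv : ∀ c, ((fun c => e c * (f c : ℂ)) ⋆[ContinuousLinearMap.mul ℂ ℂ, volume]
      (fun c => e c * (g c : ℂ))) c = e c * (conv f g c : ℂ) := by
    intro c
    rw [convolution_def, conv, ← integral_complex_ofReal, ← integral_const_mul]
    congr 1 with x
    have he : e x * e (c - x) = e c := by
      simp only [e, ← fourier_apply_add, add_sub_cancel]
    simp only [ContinuousLinearMap.mul_apply']
    push_cast
    linear_combination (f x * g (c - x) : ℂ) * he
  have key := integral_convolution (ContinuousLinearMap.mul ℂ ℂ) (twist hf) (twist hg)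
  simp_rw [hconv, ContinuousLinearMap.mul_apply'] at key
  simpa only [fc_eq_integral] using key

lemma integral_max_cos_sub_cos {a : ℝ} (ha0 : 0 ≤ a) (ha : a ≤ 1 / 2) :
    ∫ s in -(1 / 2 : ℝ)..1 / 2, max (cos (2 * π * s) - cos (2 * π * a)) 0
      = sin (2 * π * a) / π - 2 * a * cos (2 * π * a) := by
  set ψ : ℝ → ℝ := fun s => max (cos (2 * π * s) - cos (2 * π * a)) 0
  have hψ : ∀ u v, IntervalIntegrable ψ volume u v :=
    fun u v => (by fun_prop : Continuous ψ).intervalIntegrable u v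
  have cos_le_iff : ∀ {s t : ℝ}, |s| ≤ 1 / 2 → |t| ≤ 1 / 2 →
      (cos (2 * π * s) ≤ cos (2 * π * t) ↔ |t| ≤ |s|) := by
    intro s t hs ht
    have mem : ∀ {r : ℝ}, |r| ≤ 1 / 2 → 2 * π * |r| ∈ Icc 0 π :=
      fun hr => ⟨by positivity, by nlinarith [pi_pos]⟩
    rw [← cos_abs (2 * π * s), ← cos_abs (2 * π * t), abs_mul _ s, abs_mul _ t,
      abs_of_pos two_pi_pos, strictAntiOn_cos.le_iff_ge (mem hs) (mem ht)]
    exact mul_le_mul_iff_right₀ two_pi_pos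
  have outer : ∀ s, a ≤ |s| → |s| ≤ 1 / 2 → ψ s = 0 := fun s h1 h2 =>
    max_eq_right (sub_nonpos.2 ((cos_le_iff h2 (by rwa [abs_of_nonneg ha0])).2
      (by rwa [abs_of_nonneg ha0])))
  have inner : ∀ s, |s| ≤ a → ψ s = cos (2 * π * s) - cos (2 * π * a) := fun s h =>
    max_eq_left (sub_nonneg.2 ((cos_le_iff (by rwa [abs_of_nonneg ha0]) (h.trans ha)).2
      (by rwa [abs_of_nonneg ha0])))
  have hsin : ∫ s in -a..a, cos (2 * π * s) = sin (2 * π * a) / π := by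
    rw [intervalIntegral.integral_comp_mul_left (fun s => cos s) two_pi_pos.ne', integral_cos,
      mul_neg, sin_neg, smul_eq_mul]
    field_simp
    ring
  have h_left : ∫ s in -(1 / 2 : ℝ)..-a, ψ s = 0 := by
    refine (intervalIntegral.integral_congr (g := fun _ => 0) fun s hs => ?_).trans (by simp)
    rw [uIcc_of_le (by linarith)] at hs
    exact outer s (by rw [abs_of_nonpos (by linarith [hs.2])]; linarith [hs.2])
      (by rw [abs_of_nonpos (by linarith [hs.2])]; linarith [hs.1])
  have h_right : ∫ s in a..1 / 2, ψ s = 0 := by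
    refine (intervalIntegral.integral_congr (g := fun _ => 0) fun s hs => ?_).trans (by simp)
    rw [uIcc_of_le (by linarith)] at hs
    exact outer s (by rw [abs_of_nonneg (by linarith [hs.1])]; exact hs.1)
      (by rw [abs_of_nonneg (by linarith [hs.1])]; exact hs.2)
  have h_mid : ∫ s in -a..a, ψ s = ∫ s in -a..a, (cos (2 * π * s) - cos (2 * π * a)) := by
    refine intervalIntegral.integral_congr fun s hs => ?_
    rw [uIcc_of_le (by linarith)] at hs
    exact inner s (abs_le.2 hs)
  rw [← intervalIntegral.integral_add_adjacent_intervals (hψ _ a) (hψ _ _),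
    ← intervalIntegral.integral_add_adjacent_intervals (hψ _ (-a)) (hψ _ _),
    h_left, h_mid, h_right, intervalIntegral.integral_sub
      ((by fun_prop : Continuous fun s => cos (2 * π * s)).intervalIntegrable _ _)
      intervalIntegrable_const, hsin, intervalIntegral.integral_const, smul_eq_mul]
  ring

lemma integral_add_zsmul_eq {E : Type*} [NormedAddCommGroup E] [NormedSpace ℝ E]
    {T : ℝ} [Fact (0 < T)] {φ : AddCircle T → E} (hφ : AEStronglyMeasurable φ volume)
    (s : AddCircle T) {n : ℤ} (hn : n ≠ 0) :
    ∫ x, φ (s + n • x) = ∫ x, φ x := by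
  have hmul := Measure.measurePreserving_zsmul (volume : Measure (AddCircle T)) hn
  have hφs : AEStronglyMeasurable (fun y => φ (s + y)) volume :=
    hφ.comp_measurePreserving (measurePreserving_add_left volume s)
  calc ∫ x, φ (s + n • x) = ∫ y, φ (s + y) ∂(volume.map (n • ·)) :=
        (integral_map hmul.measurable.aemeasurable (hmul.map_eq ▸ hφs)).symm
    _ = ∫ y, φ (s + y) := by rw [hmul.map_eq]
    _ = ∫ y, φ y := integral_add_left_eq_self φ s

lemma re_toCircle_coe (r : ℝ) :
    (AddCircle.toCircle (r : UnitAddCircle) : ℂ).re = cos (2 * π * r) := by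
  rw [AddCircle.toCircle_apply_mk, Circle.coe_exp, div_one, Complex.exp_ofReal_mul_I_re]

lemma integral_max_re_toCircle_sub_cos (s : UnitAddCircle) {n : ℤ} (hn : n ≠ 0) {a : ℝ}
    (ha0 : 0 ≤ a) (ha : a ≤ 1 / 2) :
    ∫ x : UnitAddCircle, max (((s + n • x).toCircle : ℂ).re - cos (2 * π * a)) 0
      = sin (2 * π * a) / π - 2 * a * cos (2 * π * a) := by
  have hφ : Continuous fun y : UnitAddCircle =>
      max ((y.toCircle : ℂ).re - cos (2 * π * a)) 0 := by fun_prop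
  rw [integral_add_zsmul_eq hφ.aestronglyMeasurable s hn,
    ← UnitAddCircle.intervalIntegral_preimage (-(1 / 2))]
  norm_num only [re_toCircle_coe]
  exact integral_max_cos_sub_cos ha0 ha

lemma exists_toCircle_mul_eq_norm {T : ℝ} [hT : Fact (0 < T)] (z : ℂ) :
    ∃ s : AddCircle T, (s.toCircle : ℂ) * z = ‖z‖ := by
  obtain ⟨s, hs⟩ := (AddCircle.homeomorphCircle hT.out.ne').surjective (Circle.exp (-z.arg))
  refine ⟨s, ?_⟩
  rw [← AddCircle.homeomorphCircle_apply hT.out.ne', hs, Circle.coe_exp]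
  conv_lhs => rw [← Complex.norm_mul_exp_arg_mul_I z]
  rw [mul_left_comm, ← Complex.exp_add]
  simp

lemma integral_mul_le_bathtub {α : Type*} [MeasurableSpace α] {μ : Measure α}
    [IsFiniteMeasure μ] {g h : α → ℝ} {M C : ℝ} (hg : Integrable g μ)
    (hg0 : ∀ᵐ x ∂μ, 0 ≤ g x) (hgM : ∀ᵐ x ∂μ, g x ≤ M) (hh : AEStronglyMeasurable h μ)
    (hhC : ∀ᵐ x ∂μ, ‖h x‖ ≤ C) (t : ℝ) :
    ∫ x, h x * g x ∂μ ≤ M * ∫ x, max (h x - t) 0 ∂μ + t * ∫ x, g x ∂μ := by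
  have hpos : Integrable (fun x => max (h x - t) 0) μ :=
    .of_bound ((hh.sub aestronglyMeasurable_const).sup aestronglyMeasurable_const) (C + |t|) <| by
      filter_upwards [hhC] with x hx
      rw [Real.norm_eq_abs, abs_of_nonneg (le_max_right _ _)]
      rw [Real.norm_eq_abs] at hx
      exact max_le (by linarith [le_abs_self (h x), neg_abs_le t])
        (by linarith [abs_nonneg (h x), abs_nonneg t])
  rw [← integral_const_mul, ← integral_const_mul,
    ← integral_add (hpos.const_mul M) (hg.const_mul t)]
  refine integral_mono_ae (hg.bdd_mul hh hhC) ((hpos.const_mul M).add (hg.const_mul t)) ?_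
  filter_upwards [hg0, hgM] with x hx0 hxM
  have := le_max_left (h x - t) 0
  have := le_max_right (h x - t) 0
  nlinarith

lemma exists_norm_fc_eq_integral_re_mul {g : UnitAddCircle → ℝ} (hg : Integrable g) (j : ℤ) :
    ∃ s : UnitAddCircle, ‖fc g j‖ = ∫ c, ((s + (-j) • c).toCircle : ℂ).re * g c := by
  obtain ⟨s, hs⟩ := exists_toCircle_mul_eq_norm (T := 1) (fc g j)
  have hint : Integrable (fun c => fourier (-j) c * (g c : ℂ)) :=
    hg.ofReal.bdd_mul (c := 1) (fourier (-j)).continuous.aestronglyMeasurable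
      (.of_forall fun c => by simp [fourier_apply, Circle.norm_coe])
  refine ⟨s, ?_⟩
  calc ‖fc g j‖ = ((s.toCircle : ℂ) * fc g j).re := by rw [hs, Complex.ofReal_re]
    _ = ∫ c, ((s.toCircle : ℂ) * (fourier (-j) c * g c)).re := by
        rw [fc_eq_integral, ← integral_const_mul]
        exact (integral_re (hint.const_mul _)).symm
    _ = ∫ c, ((s + (-j) • c).toCircle : ℂ).re * g c := by
        congr 1 with c
        rw [← mul_assoc, Complex.re_mul_ofReal, fourier_apply, ← Circle.coe_mul,
          ← AddCircle.toCircle_add]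

lemma norm_fc_le {g : UnitAddCircle → ℝ} {M : ℝ} (hg : Integrable g)
    (hg0 : ∀ᵐ c, 0 ≤ g c) (hg1 : ∫ c, g c = 1) (hgM : ∀ᵐ c, g c ≤ M) {j : ℤ} (hj : j ≠ 0) :
    ‖fc g j‖ ≤ M / π * sin (π / M) := by
  have hM : 1 ≤ M := by simpa [hg1] using integral_mono_ae hg (integrable_const M) hgM
  obtain ⟨s, hs⟩ := exists_norm_fc_eq_integral_re_mul hg j
  set h : UnitAddCircle → ℝ := fun c => ((s + (-j) • c).toCircle : ℂ).re
  have hh1 : ∀ c, ‖h c‖ ≤ 1 := fun c =>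
    (Complex.abs_re_le_norm _).trans (by simp [Circle.norm_coe])
  -- `cos (2πa) = cos (π / M)` is the level `t` at which `M · 1{h > t}` has mass one.
  set a := 1 / (2 * M)
  have ha0 : 0 ≤ a := by positivity
  have ha : a ≤ 1 / 2 := by
    rw [div_le_div_iff₀ (by positivity) two_pos]
    linarith
  have hI : ∫ c, max (h c - cos (2 * π * a)) 0
      = sin (2 * π * a) / π - 2 * a * cos (2 * π * a) :=
    integral_max_re_toCircle_sub_cos s (neg_ne_zero.2 hj) ha0 ha
  calc ‖fc g j‖ = ∫ c, h c * g c := hs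
    _ ≤ (M * ∫ c, max (h c - cos (2 * π * a)) 0) + cos (2 * π * a) * ∫ c, g c :=
        integral_mul_le_bathtub hg hg0 hgM (by fun_prop : Continuous h).aestronglyMeasurable
          (.of_forall hh1) _
    _ = M * (sin (2 * π * a) / π - 2 * a * cos (2 * π * a)) + cos (2 * π * a) := by
        rw [hI, hg1, mul_one]
    _ = M / π * sin (π / M) := by
        have h2πa : 2 * π * a = π / M := by simp only [a]; field_simp
        have h2aM : 2 * a * M = 1 := by simp only [a]; field_simp
        rw [h2πa]
        linear_combination (-cos (π / M)) * h2aM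

theorem fhat_green_bound_general (f : UnitAddCircle → ℝ) (hf : IsPdf f)
    (j : ℤ) (hj : j ≠ 0) :
    ‖fc f j‖ ^ 2 ≤ normInf (conv f f) / Real.pi * Real.sin (Real.pi / normInf (conv f f)) := by
  obtain ⟨hf0, hf2, hf1⟩ := hf
  have hfi : Integrable f := hf2.integrable one_le_two
  rw [← norm_pow, sq, ← fc_conv hfi hfi]
  exact norm_fc_le (integrable_conv hfi hfi) (.of_forall (conv_nonneg hf0 hf0))
    (by rw [integral_conv hfi hfi, hf1, one_mul]) (ae_le_normInf (memLp_top_conv_self hf2)) hj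

theorem fhat_green_bound (f : UnitAddCircle → ℝ) (hf : IsPdf f) (hsupp : SuppIn f)
    (j : ℤ) (hj : j ≠ 0) :
    ‖fc f j‖ ^ 2 ≤ normInf (conv f f) / Real.pi * Real.sin (Real.pi / normInf (conv f f)) :=
  fhat_green_bound_general f hf j hj
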